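/- arXiv:2502.01551 — 10 statements merged into one kernel-verified Lean document; each statement's English description precedes it below -/
import Mathlib

section
/- Let k ≥ 1 and let G be a finite connected simple graph. Let H be the simple graph on the vertex set V(G) × {1,…,k} in which (u,i) and (u,j) are adjacent whenever i ≠ j (each set {u} × {1,…,k} is a clique K_u), and for distinct u,v ∈ V(G), (u,i) and (v,j) are adjacent if and only if uv is an edge of G and i ≠ j (each edge of G is replaced by an antimatching between K_u and K_v); there are no other edges. Then every proper k-coloring c of H satisfies c(u,i) = c(v,i) for all u,v ∈ V(G) and all i ∈ {1,…,k}. -/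
/-- The graph on `V × Fin k` in which each set `{u} × Fin k` is a clique, and each edge
`uv` of `G` is replaced by an antimatching: `(u,i)` and `(v,j)` are adjacent iff `i ≠ j`. -/
def antimatchingGraph {V : Type*} (G : SimpleGraph V) (k : ℕ) :
    SimpleGraph (V × Fin k) where
  Adj x y := x.2 ≠ y.2 ∧ (x.1 = y.1 ∨ G.Adj x.1 y.1)
  symm := by
    constructor
    rintro x y ⟨h1, h2⟩
    exact ⟨h1.symm, h2.elim (fun h => Or.inl h.symm) (fun h => Or.inr (G.adj_symm h))⟩
  loopless := by
    constructor
    rintro x ⟨h, -⟩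
    exact h rfl

/-!
Each clique `{u} × Fin k` meets all `k` colors, so for an edge `uv` of `G` the color of
`(u, i)` is the color of some `(v, j)`; since `(u, i)` is adjacent to every `(v, j)` with
`j ≠ i`, that `j` is `i`. Thus `c (·, i)` is constant along edges, hence constant on the
connected graph `G`.
-/

theorem SimpleGraph.Reachable.apply_eq_of_forall_adj {V β : Type*} {G : SimpleGraph V}
    {f : V → β} (hf : ∀ x y, G.Adj x y → f x = f y) {u v : V} (h : G.Reachable u v) :
    f u = f v := by
  obtain ⟨w⟩ := h
  induction w with
  | nil => rfl
  | cons hadj _ ih => exact (hf _ _ hadj).trans ih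

section antimatchingGraph

variable {V : Type*} {G : SimpleGraph V} {k : ℕ}

theorem antimatchingGraph_coloring_comp_mk_surjective
    (c : (antimatchingGraph G k).Coloring (Fin k)) (v : V) :
    (c ∘ Prod.mk v).Surjective :=
  Finite.injective_iff_surjective.mp <|
    c.injective_comp_of_pairwise_adj (Prod.mk v) fun _ _ hij => ⟨hij, Or.inl rfl⟩

theorem antimatchingGraph_coloring_eq_of_adj (c : (antimatchingGraph G k).Coloring (Fin k))
    {u v : V} (huv : G.Adj u v) (i : Fin k) : c (u, i) = c (v, i) := by
  obtain ⟨j, hj⟩ := antimatchingGraph_coloring_comp_mk_surjective c v (c (u, i))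
  obtain rfl : i = j := by
    by_contra hij
    exact c.valid (show (antimatchingGraph G k).Adj (u, i) (v, j) from ⟨hij, Or.inr huv⟩) hj.symm
  exact hj.symm

end antimatchingGraph

theorem antimatchingGraph_coloring_eq_general {V : Type*}
    (k : ℕ) (G : SimpleGraph V) (hG : G.Connected)
    (c : (antimatchingGraph G k).Coloring (Fin k)) (u v : V) (i : Fin k) :
    c (u, i) = c (v, i) :=
  (hG.preconnected u v).apply_eq_of_forall_adj (f := fun w => c (w, i))
    fun _ _ hadj => antimatchingGraph_coloring_eq_of_adj c hadj i

/-- Let `k ≥ 1` and let `G` be a finite connected simple graph. In every proper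
`k`-coloring of the antimatching graph of `G`, the vertices `(u, i)` and `(v, i)` receive
the same color, for all `u, v` and all `i`. -/
theorem antimatchingGraph_coloring_eq {V : Type*} [Fintype V]
    (k : ℕ) (hk : 1 ≤ k) (G : SimpleGraph V) (hG : G.Connected)
    (c : (antimatchingGraph G k).Coloring (Fin k)) (u v : V) (i : Fin k) :
    c (u, i) = c (v, i) :=
  antimatchingGraph_coloring_eq_general k G hG c u v i
end

section
/- Let k ≥ 3 and let G be a finite connected simple graph on n vertices. Let G' be the simple graph whose vertex set is the disjoint union of V(G) (the part G₀) and V(G) × {1,…,k} (the part G₁), with the following edges and no others: u,v ∈ G₀ are adjacent iff uv ∈ E(G); (u,i) and (u,j) in G₁ are adjacent iff i ≠ j; for distinct u,v, (u,i) and (v,j) are adjacent iff uv ∈ E(G) and i ≠ j; and u ∈ G₀ is adjacent to (u,i) ∈ G₁ for every i ∈ {4,…,k}. Then: (1) G' has exactly (k+1)·n vertices; (2) G is 3-colorable if and only if G' is k-colorable; and (3) if G has maximum degree at most 4, then G' has maximum degree at most 5k−4. -/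
/-!
From a 3-colouring of `G`, colour `u ∈ G₀` by its colour in `{1, 2, 3}` and `(u, i) ∈ G₁` by
`i`. Conversely, in a `k`-colouring of `G'` each clique `K_u` receives every colour exactly
once, and for adjacent `u, v` the antimatching forces `(u, i)` and `(v, i)` to share a colour.
The position in `K_u` carrying the colour of `u` lies in `{1, 2, 3}`, since `u` sees the
rest of `K_u`, and it is a proper 3-colouring of `G`: equal positions at adjacent `u, v`
would give `u` and `v` the same colour. The degree bound is a direct count: `u ∈ G₀` has at
most `4 + k` neighbours, and `(u, i)` has at most `1 + 5 (k - 1)`.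
-/

/-- The graph `G'` built from `G`: the part `G₀` is a copy of `G` (on `V`), the part `G₁`
(on `V × Fin k`, where `Fin k` represents `{1, …, k}`) consists of a clique `K_u` for each
vertex `u` with antimatchings between cliques of adjacent vertices, and each `u ∈ G₀` is
joined to the vertices `(u, i)` of its clique for `i ∈ {4, …, k}` (i.e. `(i : ℕ) ≥ 3` in
`Fin k` numbering). -/
def cliqueGadget {V : Type*} (G : SimpleGraph V) (k : ℕ) :
    SimpleGraph (V ⊕ V × Fin k) where
  Adj x y :=
    match x, y with
    | Sum.inl u, Sum.inl v => G.Adj u v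
    | Sum.inl u, Sum.inr (v, i) => u = v ∧ 3 ≤ (i : ℕ)
    | Sum.inr (v, i), Sum.inl u => u = v ∧ 3 ≤ (i : ℕ)
    | Sum.inr (u, i), Sum.inr (v, j) => i ≠ j ∧ (u = v ∨ G.Adj u v)
  symm := by
    refine ⟨?_⟩
    rintro (u | ⟨u, i⟩) (v | ⟨v, j⟩) h
    · exact G.adj_symm h
    · exact h
    · exact h
    · exact ⟨h.1.symm, h.2.elim (fun h' => Or.inl h'.symm) (fun h' => Or.inr (G.adj_symm h'))⟩
  loopless := by
    refine ⟨?_⟩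
    rintro (u | ⟨u, i⟩) h
    · exact G.irrefl h
    · exact h.1 rfl

theorem Set.ncard_le_ncard_preimage_inl_add_ncard_preimage_inr {α β : Type*}
    (s : Set (α ⊕ β)) : s.ncard ≤ (Sum.inl ⁻¹' s).ncard + (Sum.inr ⁻¹' s).ncard := by
  calc s.ncard = (Sum.inl '' (Sum.inl ⁻¹' s) ∪ Sum.inr '' (Sum.inr ⁻¹' s)).ncard := by
        rw [Set.image_preimage_inl_union_image_preimage_inr]
    _ ≤ (Sum.inl '' (Sum.inl ⁻¹' s)).ncard + (Sum.inr '' (Sum.inr ⁻¹' s)).ncard :=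
        Set.ncard_union_le _ _
    _ = (Sum.inl ⁻¹' s).ncard + (Sum.inr ⁻¹' s).ncard := by
        rw [Set.ncard_image_of_injective _ Sum.inl_injective,
          Set.ncard_image_of_injective _ Sum.inr_injective]

section cliqueGadget

open SimpleGraph

variable {V : Type*} {G : SimpleGraph V} {k : ℕ}

@[simp]
theorem cliqueGadget_adj_inl_inl {u v : V} :
    (cliqueGadget G k).Adj (.inl u) (.inl v) ↔ G.Adj u v := Iff.rfl

@[simp]
theorem cliqueGadget_adj_inl_inr {u v : V} {i : Fin k} :
    (cliqueGadget G k).Adj (.inl u) (.inr (v, i)) ↔ u = v ∧ 3 ≤ (i : ℕ) := Iff.rfl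

@[simp]
theorem cliqueGadget_adj_inr_inl {u v : V} {i : Fin k} :
    (cliqueGadget G k).Adj (.inr (v, i)) (.inl u) ↔ u = v ∧ 3 ≤ (i : ℕ) := Iff.rfl

@[simp]
theorem cliqueGadget_adj_inr_inr {u v : V} {i j : Fin k} :
    (cliqueGadget G k).Adj (.inr (u, i)) (.inr (v, j)) ↔ i ≠ j ∧ (u = v ∨ G.Adj u v) := Iff.rfl

def cliqueGadgetColoring (hk : 3 ≤ k) (c : G.Coloring (Fin 3)) :
    (cliqueGadget G k).Coloring (Fin k) :=
  Coloring.mk (Sum.elim (fun u => Fin.castLE hk (c u)) Prod.snd) <| by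
    rintro (u | ⟨u, i⟩) (v | ⟨v, j⟩) h
    · exact (Fin.castLE_injective hk).ne (c.valid h)
    · have := h.2
      have := (c u).isLt
      simp only [Sum.elim_inl, Sum.elim_inr, ne_eq, Fin.ext_iff, Fin.val_castLE]
      omega
    · have := h.2
      have := (c v).isLt
      simp only [Sum.elim_inl, Sum.elim_inr, ne_eq, Fin.ext_iff, Fin.val_castLE]
      omega
    · exact h.1

theorem colorable_cliqueGadget_of_colorable (hk : 3 ≤ k) (h : G.Colorable 3) :
    (cliqueGadget G k).Colorable k :=
  let ⟨c⟩ := h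
  ⟨cliqueGadgetColoring hk c⟩

namespace cliqueGadget

variable (C : (cliqueGadget G k).Coloring (Fin k))

theorem coloring_inr_bijective (u : V) : Function.Bijective fun i => C (.inr (u, i)) := by
  have hinj : Function.Injective fun i => C (.inr (u, i)) := fun i j hij => by
    by_contra hne
    exact C.valid (cliqueGadget_adj_inr_inr.2 ⟨hne, Or.inl rfl⟩) hij
  exact ⟨hinj, Finite.surjective_of_injective hinj⟩

theorem coloring_inr_eq_of_adj {u v : V} (huv : G.Adj u v) (i : Fin k) :
    C (.inr (u, i)) = C (.inr (v, i)) := by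
  obtain ⟨j, hj⟩ := (coloring_inr_bijective C v).2 (C (.inr (u, i)))
  obtain rfl : j = i := by
    by_contra hne
    exact C.valid (cliqueGadget_adj_inr_inr.2 ⟨hne, Or.inr huv.symm⟩) hj
  exact hj.symm

noncomputable def slot (u : V) : Fin k :=
  (Equiv.ofBijective _ (coloring_inr_bijective C u)).symm (C (.inl u))

theorem coloring_inr_slot (u : V) : C (.inr (u, slot C u)) = C (.inl u) :=
  Equiv.ofBijective_apply_symm_apply _ (coloring_inr_bijective C u) _

theorem slot_lt_three (u : V) : (slot C u : ℕ) < 3 := by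
  by_contra hge
  exact C.valid (cliqueGadget_adj_inl_inr.2 ⟨rfl, by omega⟩) (coloring_inr_slot C u).symm

noncomputable def slotColoring : G.Coloring (Fin 3) :=
  Coloring.mk (fun u => ⟨slot C u, slot_lt_three C u⟩) fun {u v} huv heq => by
    have hslot : slot C u = slot C v := Fin.ext (Fin.mk.inj heq)
    refine C.valid (cliqueGadget_adj_inl_inl.2 huv) ?_
    rw [← coloring_inr_slot C u, ← coloring_inr_slot C v, hslot,
      coloring_inr_eq_of_adj C huv]

end cliqueGadget

theorem colorable_of_colorable_cliqueGadget (h : (cliqueGadget G k).Colorable k) :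
    G.Colorable 3 :=
  let ⟨C⟩ := h
  ⟨cliqueGadget.slotColoring C⟩

theorem ncard_neighborSet_cliqueGadget_inl_le (u : V) :
    ((cliqueGadget G k).neighborSet (.inl u)).ncard ≤ (G.neighborSet u).ncard + k := by
  have hinr : Sum.inr ⁻¹' (cliqueGadget G k).neighborSet (.inl u) ⊆
      ({u} : Set V) ×ˢ Set.univ := fun ⟨_, _⟩ h => ⟨h.1.symm, trivial⟩
  calc _ ≤ (G.neighborSet u).ncard + (({u} : Set V) ×ˢ (Set.univ : Set (Fin k))).ncard :=
        (Set.ncard_le_ncard_preimage_inl_add_ncard_preimage_inr _).trans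
          (Nat.add_le_add_left (Set.ncard_le_ncard hinr) _)
    _ = (G.neighborSet u).ncard + k := by simp [Set.ncard_prod]

theorem ncard_neighborSet_cliqueGadget_inr_le [Finite V] (u : V) (i : Fin k) :
    ((cliqueGadget G k).neighborSet (.inr (u, i))).ncard ≤
      1 + ((G.neighborSet u).ncard + 1) * (k - 1) := by
  have hinl : Sum.inl ⁻¹' (cliqueGadget G k).neighborSet (.inr (u, i)) ⊆ {u} :=
    fun _ h => h.1
  have hinr : Sum.inr ⁻¹' (cliqueGadget G k).neighborSet (.inr (u, i)) ⊆
      insert u (G.neighborSet u) ×ˢ {i}ᶜ := fun ⟨_, _⟩ h =>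
    ⟨h.2.imp Eq.symm id, Ne.symm h.1⟩
  calc _ ≤ ({u} : Set V).ncard + (insert u (G.neighborSet u) ×ˢ ({i}ᶜ : Set (Fin k))).ncard :=
        (Set.ncard_le_ncard_preimage_inl_add_ncard_preimage_inr _).trans
          (Nat.add_le_add (Set.ncard_le_ncard hinl) (Set.ncard_le_ncard hinr))
    _ ≤ 1 + ((G.neighborSet u).ncard + 1) * (k - 1) := by
        rw [Set.ncard_singleton, Set.ncard_prod, Set.ncard_compl, Set.ncard_singleton,
          Nat.card_eq_fintype_card, Fintype.card_fin]
        gcongr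
        exact Set.ncard_insert_le _ _

end cliqueGadget

theorem cliqueGadget_card_colorable_degree_general {V : Type*} [Fintype V]
    (k : ℕ) (hk : 3 ≤ k) (G : SimpleGraph V) :
    Fintype.card (V ⊕ V × Fin k) = (k + 1) * Fintype.card V ∧
    (G.Colorable 3 ↔ (cliqueGadget G k).Colorable k) ∧
    ((∀ v : V, (G.neighborSet v).ncard ≤ 4) →
      ∀ x : V ⊕ V × Fin k, ((cliqueGadget G k).neighborSet x).ncard ≤ 5 * k - 4) := by
  refine ⟨by simp [Fintype.card_sum, Fintype.card_prod]; ring,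
    ⟨colorable_cliqueGadget_of_colorable hk, colorable_of_colorable_cliqueGadget⟩, ?_⟩
  rintro hdeg (u | ⟨u, i⟩)
  · calc _ ≤ (G.neighborSet u).ncard + k := ncard_neighborSet_cliqueGadget_inl_le u
      _ ≤ 5 * k - 4 := by have := hdeg u; omega
  · calc _ ≤ 1 + ((G.neighborSet u).ncard + 1) * (k - 1) :=
          ncard_neighborSet_cliqueGadget_inr_le u i
      _ ≤ 1 + 5 * (k - 1) := by gcongr; have := hdeg u; omega
      _ ≤ 5 * k - 4 := by omega

/-- Let `k ≥ 3` and let `G` be a finite connected simple graph on `n` vertices. Then: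
(1) `G'` has exactly `(k+1) · n` vertices; (2) `G` is 3-colorable iff `G'` is
`k`-colorable; (3) if `G` has maximum degree at most 4, then `G'` has maximum degree at
most `5k - 4`. -/
theorem cliqueGadget_card_colorable_degree {V : Type*} [Fintype V]
    (k : ℕ) (hk : 3 ≤ k) (G : SimpleGraph V) (hG : G.Connected) :
    Fintype.card (V ⊕ V × Fin k) = (k + 1) * Fintype.card V ∧
    (G.Colorable 3 ↔ (cliqueGadget G k).Colorable k) ∧
    ((∀ v : V, (G.neighborSet v).ncard ≤ 4) →
      ∀ x : V ⊕ V × Fin k, ((cliqueGadget G k).neighborSet x).ncard ≤ 5 * k - 4) :=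
  cliqueGadget_card_colorable_degree_general k hk G
end

section
/- Let k ≥ 2 and let G be a finite connected simple graph with at least two vertices. Let G' be the simple graph whose vertex set is the disjoint union of V(G) and E(G) × {1,…,k−1}, with the following edges and no others: u,v ∈ V(G) are adjacent in G' iff they are adjacent in G; (e,i) and (e,j) are adjacent iff i ≠ j (so each set {e} × {1,…,k−1} is a clique K_e of size k−1); and v ∈ V(G) is adjacent to (e,i) iff v is an endpoint of the edge e. Then G is (k+1)-colorable if and only if the vertex set of G' can be partitioned into k+1 dominating sets of G', i.e., there exists a function f from V(G') to a set of k+1 colors such that each color class f⁻¹(c) is a dominating set of G'. -/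
/-- The graph `G'` obtained from `G` by adding, for every edge `e` of `G`, a clique `K_e`
of size `m` (on `{e} × Fin m`) which is complete to both endpoints of `e`. -/
def domaticGadget {V : Type*} (G : SimpleGraph V) (m : ℕ) :
    SimpleGraph (V ⊕ G.edgeSet × Fin m) where
  Adj x y :=
    match x, y with
    | Sum.inl u, Sum.inl v => G.Adj u v
    | Sum.inl u, Sum.inr (e, _) => u ∈ (e : Sym2 V)
    | Sum.inr (e, _), Sum.inl u => u ∈ (e : Sym2 V)
    | Sum.inr (e, i), Sum.inr (f, j) => e = f ∧ i ≠ j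
  symm := by
    refine ⟨?_⟩
    rintro (u | ⟨e, i⟩) (v | ⟨f, j⟩) h
    · exact h.symm
    · exact h
    · exact h
    · exact ⟨h.1.symm, h.2.symm⟩
  loopless := by
    refine ⟨?_⟩
    rintro (u | ⟨e, i⟩) h
    · exact G.irrefl h
    · exact h.2 rfl

/-!
A proper colouring `c` of `G` with `m + 2` colours leaves exactly `m` colours unused on each edge
`uv`; giving them to the clique `K_uv` puts every colour into the closed neighbourhood of each
vertex of `K_uv` and, as long as `u` has a neighbour `v`, of `u`. Conversely, if adjacent `u` and
`v` had the same colour in a domatic colouring, the closed neighbourhood `{u, v} ∪ K_uv` of a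
vertex of `K_uv` would carry at most `m + 1` colours.
-/

open SimpleGraph Finset

section

variable {V W α : Type*}

def IsDomaticColoring (H : SimpleGraph W) (f : W → α) : Prop :=
  ∀ a x, f x = a ∨ ∃ y, f y = a ∧ H.Adj x y

theorem isDomaticColoring_iff {H : SimpleGraph W} {f : W → α} :
    IsDomaticColoring H f ↔ ∀ a x, ∃ y, f y = a ∧ (x = y ∨ H.Adj x y) := by
  refine forall₂_congr fun a x => ⟨?_, ?_⟩
  · rintro (rfl | ⟨y, rfl, hxy⟩)
    exacts [⟨x, rfl, .inl rfl⟩, ⟨y, rfl, .inr hxy⟩]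
  · rintro ⟨y, rfl, rfl | hxy⟩
    exacts [.inl rfl, .inr ⟨y, rfl, hxy⟩]

variable {G : SimpleGraph V} {m : ℕ}

theorem SimpleGraph.Coloring.card_compl_toFinset_map_edge [Fintype α] [DecidableEq α]
    (c : G.Coloring α) (e : G.edgeSet) :
    #((e : Sym2 V).map c).toFinsetᶜ = Fintype.card α - 2 := by
  rw [card_compl, Sym2.card_toFinset_of_not_isDiag]
  exact (⊤ : SimpleGraph α).not_isDiag_of_mem_edgeSet (c.mapEdgeSet e).2

theorem SimpleGraph.Coloring.exists_fin_surjOn_compl_map_edge [Fintype α]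
    (c : G.Coloring α) (hα : Fintype.card α = m + 2) (e : G.edgeSet) :
    ∃ g : Fin m → α, ∀ a ∉ (e : Sym2 V).map c, ∃ i, g i = a := by
  classical
  have hcard : #((e : Sym2 V).map c).toFinsetᶜ = m := by
    rw [c.card_compl_toFinset_map_edge, hα, Nat.add_sub_cancel]
  let φ := equivFinOfCardEq hcard
  exact ⟨fun i => φ.symm i, fun a ha => ⟨φ ⟨a, by simpa using ha⟩, by simp⟩⟩

theorem exists_isDomaticColoring_domaticGadget [Fintype α] (hG : ∀ v, ∃ u, G.Adj v u)
    (c : G.Coloring α) (hα : Fintype.card α = m + 2) :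
    ∃ f : V ⊕ G.edgeSet × Fin m → α, IsDomaticColoring (domaticGadget G m) f := by
  choose g hg using c.exists_fin_surjOn_compl_map_edge hα
  let f : V ⊕ G.edgeSet × Fin m → α := Sum.elim c fun p => g p.1 p.2
  have cover : ∀ (e : G.edgeSet) x,
      (∀ w ∈ (e : Sym2 V), x = .inl w ∨ (domaticGadget G m).Adj x (.inl w)) →
      (∀ j, x = .inr (e, j) ∨ (domaticGadget G m).Adj x (.inr (e, j))) →
      ∀ a, ∃ y, f y = a ∧ (x = y ∨ (domaticGadget G m).Adj x y) := by
    intro e x hends hclique a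
    by_cases ha : a ∈ (e : Sym2 V).map c
    · obtain ⟨w, hw, rfl⟩ := Sym2.mem_map.1 ha
      exact ⟨.inl w, rfl, hends w hw⟩
    · obtain ⟨j, rfl⟩ := hg e a ha
      exact ⟨.inr (e, j), rfl, hclique j⟩
  refine ⟨f, isDomaticColoring_iff.2 ?_⟩
  rintro a (v | ⟨e, i⟩)
  · obtain ⟨u, hvu⟩ := hG v
    refine cover ⟨s(v, u), hvu⟩ (.inl v) (fun w hw => ?_) (fun _ => .inr (Sym2.mem_mk_left v u)) a
    rcases Sym2.mem_iff.1 hw with rfl | rfl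
    exacts [.inl rfl, .inr hvu]
  · refine cover e (.inr (e, i)) (fun _ hw => .inr hw) (fun j => ?_) a
    by_cases hij : i = j
    exacts [.inl (hij ▸ rfl), .inr ⟨rfl, hij⟩]

theorem IsDomaticColoring.map_inl_ne_of_adj [Fintype α] (hm : 0 < m)
    (hα : m + 1 < Fintype.card α) {f : V ⊕ G.edgeSet × Fin m → α}
    (hf : IsDomaticColoring (domaticGadget G m) f) {u v : V} (huv : G.Adj u v) :
    f (.inl u) ≠ f (.inl v) := by
  intro heq
  let e : G.edgeSet := ⟨s(u, v), huv⟩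
  let i₀ : Fin m := ⟨0, hm⟩
  have hsurj : Function.Surjective fun o : Option (Fin m) =>
      o.elim (f (.inl u)) fun j => f (.inr (e, j)) := by
    intro a
    obtain ⟨y, rfl, hy⟩ := isDomaticColoring_iff.1 hf a (.inr (e, i₀))
    rcases hy with rfl | hy
    · exact ⟨some i₀, rfl⟩
    rcases y with w | ⟨e', j⟩
    · rcases Sym2.mem_iff.1 hy with rfl | rfl
      exacts [⟨none, rfl⟩, ⟨none, heq⟩]
    · obtain ⟨rfl, -⟩ := hy
      exact ⟨some j, rfl⟩
  have := Fintype.card_le_of_surjective _ hsurj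
  simp only [Fintype.card_option, Fintype.card_fin] at this
  omega

def IsDomaticColoring.toColoring [Fintype α] (hm : 0 < m) (hα : m + 1 < Fintype.card α)
    {f : V ⊕ G.edgeSet × Fin m → α} (hf : IsDomaticColoring (domaticGadget G m) f) :
    G.Coloring α :=
  Coloring.mk (f ∘ .inl) (hf.map_inl_ne_of_adj hm hα)

end

/-- Let `k ≥ 2` and let `G` be a finite connected simple graph with at least two vertices.
Then `G` is `(k+1)`-colorable if and only if the vertex set of `G'` (obtained by adding a
`(k-1)`-clique complete to both endpoints of each edge) can be partitioned into `k + 1`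
dominating sets of `G'`. -/
theorem colorable_iff_domatic_partition {V : Type*} [Fintype V]
    (k : ℕ) (hk : 2 ≤ k) (G : SimpleGraph V) (hG : G.Connected)
    (hV : 1 < Fintype.card V) :
    G.Colorable (k + 1) ↔
      ∃ f : (V ⊕ G.edgeSet × Fin (k - 1)) → Fin (k + 1),
        ∀ (col : Fin (k + 1)) (x : V ⊕ G.edgeSet × Fin (k - 1)),
          f x = col ∨ ∃ y, f y = col ∧ (domaticGadget G (k - 1)).Adj x y := by
  constructor
  · rintro ⟨c⟩
    have : Nontrivial V := Fintype.one_lt_card_iff_nontrivial.1 hV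
    exact exists_isDomaticColoring_domaticGadget hG.preconnected.exists_adj_of_nontrivial c
      (by rw [Fintype.card_fin]; omega)
  · rintro ⟨f, hf⟩
    exact ⟨IsDomaticColoring.toColoring (by omega) (by rw [Fintype.card_fin]; omega) hf⟩
end

section
/- Let k ≥ 3 and let G be a finite simple graph. Let G' be the simple graph whose vertex set is the disjoint union of V(G) and a set U of k new vertices, where two vertices of V(G) are adjacent in G' iff they are adjacent in G, the vertices of U are pairwise adjacent, and every vertex of U is adjacent to every vertex of V(G). Then G is k-colorable if and only if the vertex set of G' can be partitioned into k parts each of which induces an acyclic subgraph of G' (i.e., there exists a function f from V(G') to a set of k colors such that for each color c, the subgraph of G' induced by f⁻¹(c) contains no cycle). -/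
/-!
In `G'` a part holding three new vertices, two new vertices and an old one, or a new vertex
and an edge of `G` contains a triangle. So in a partition of `V(G')` into `k` forests every part
holds at most two new vertices, a part meeting `V(G)` holds at most one, and a part holding one
meets `V(G)` in an independent set. As the `k` new vertices are spread over `k` parts, the parts
without a new vertex are exactly as many as those with two, which miss `V(G)`; splitting each of
the former (a forest, hence bipartite) into two independent sets gives a `k`-colouring of `G`.
Conversely a `k`-colouring `c` of `G` yields the partition `Sum.elim c id`, whose parts are stars
centred at the new vertices.
-/

/-- The graph obtained from `G` by adding `k` new universal vertices (the set `U`), where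
each new vertex is adjacent to every vertex of `G` and the new vertices are pairwise
adjacent. -/
def SimpleGraph.addUniversal {V : Type*} (G : SimpleGraph V) (k : ℕ) :
    SimpleGraph (V ⊕ Fin k) where
  Adj x y :=
    match x, y with
    | Sum.inl u, Sum.inl v => G.Adj u v
    | Sum.inl _, Sum.inr _ => True
    | Sum.inr _, Sum.inl _ => True
    | Sum.inr i, Sum.inr j => i ≠ j
  symm := by
    constructor
    rintro (u | i) (v | j) h
    · exact G.adj_symm h
    · trivial
    · trivial
    · exact Ne.symm h
  loopless := by
    constructor
    rintro (u | i) h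
    · exact G.ne_of_adj h rfl
    · exact h rfl

open Finset

namespace SimpleGraph

variable {W : Type*} {H : SimpleGraph W}

theorem isAcyclic_of_forall_adj_eq_or_eq (z : W)
    (h : ∀ ⦃a b⦄, H.Adj a b → a = z ∨ b = z) : H.IsAcyclic :=
  (isAcyclic_starGraph z).anti fun _ _ hab => starGraph_adj.mpr ⟨hab.ne, h hab⟩

theorem IsAcyclic.not_adj_of_induce {s : Set W} (h : (H.induce s).IsAcyclic) {a b c : W}
    (ha : a ∈ s) (hb : b ∈ s) (hc : c ∈ s) (hab : H.Adj a b) (hbc : H.Adj b c) :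
    ¬ H.Adj a c := fun hac => by
  classical
  exact h.cliqueFree le_rfl {⟨a, ha⟩, ⟨b, hb⟩, ⟨c, hc⟩} <|
    is3Clique_triple_iff (a := (⟨a, ha⟩ : s)) (b := ⟨b, hb⟩) (c := ⟨c, hc⟩)
      |>.mpr ⟨hab, hac, hbc⟩

end SimpleGraph

theorem Fintype.two_mul_card_fiber_eq_zero_add_card_fiber_eq_one {α β : Type*} [Fintype α]
    [Fintype β] [DecidableEq β] (g : α → β) (hcard : Fintype.card α = Fintype.card β)
    (hg : ∀ b, #{a | g a = b} ≤ 2) :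
    2 * #{b | #{a | g a = b} = 0} + #{b | #{a | g a = b} = 1} = Fintype.card β := by
  have hfibers : ∑ b, #{a | g a = b} = Fintype.card β := by
    rw [← hcard, ← card_univ,
      card_eq_sum_card_fiberwise (f := g) (t := univ) fun a _ => mem_univ (g a)]
  have hpointwise : ∀ b, #{a | g a = b} + (2 * (if #{a | g a = b} = 0 then 1 else 0) +
      (if #{a | g a = b} = 1 then 1 else 0)) = 2 := fun b => by
    have := hg b
    split_ifs <;> omega
  have hsum := Finset.sum_congr rfl fun b (_ : b ∈ univ) => hpointwise b
  simp only [sum_add_distrib, ← mul_sum, sum_boole, hfibers, sum_const, card_univ,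
    smul_eq_mul] at hsum
  push_cast at hsum
  omega

namespace SimpleGraph

variable {V : Type*} {G : SimpleGraph V} {k : ℕ}

theorem Coloring.isAcyclic_induce_addUniversal (c : G.Coloring (Fin k)) (col : Fin k) :
    ((G.addUniversal k).induce (Sum.elim c id ⁻¹' {col})).IsAcyclic := by
  refine isAcyclic_of_forall_adj_eq_or_eq ⟨Sum.inr col, rfl⟩ ?_
  rintro ⟨u | i, hu⟩ ⟨v | j, hv⟩ huv
  · exact absurd (hu.trans hv.symm) (c.valid huv)
  · exact .inr (Subtype.ext (congrArg Sum.inr hv))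
  all_goals exact .inl (Subtype.ext (congrArg Sum.inr hu))

theorem exists_ne_of_adj_of_colorable_induce {ι : Type*} {n : ℕ} (p : V → ι)
    (h : ∀ i, (G.induce {v | p v = i}).Colorable n) :
    ∃ g : V → Fin n, ∀ ⦃v w⦄, G.Adj v w → p v = p w → g v ≠ g w := by
  let c i := (h i).some
  refine ⟨fun v => c (p v) ⟨v, rfl⟩, fun v w hadj hvw => ?_⟩
  suffices ∀ i j (hv : p v = i) (hw : p w = j), i = j → c i ⟨v, hv⟩ ≠ c j ⟨w, hw⟩ from
    this _ _ rfl rfl hvw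
  rintro i _ hv hw rfl
  exact (c i).valid hadj

def universalCount (f : V ⊕ Fin k → Fin k) (col : Fin k) : ℕ := #{i | f (.inr i) = col}

section AcyclicPartition

variable {f : V ⊕ Fin k → Fin k}

theorem universalCount_le_two
    (hf : ∀ col, ((G.addUniversal k).induce (f ⁻¹' {col})).IsAcyclic) (col : Fin k) :
    universalCount f col ≤ 2 := by
  by_contra! h
  obtain ⟨i, hi, j, hj, l, hl, hij, hil, hjl⟩ := two_lt_card.mp h
  simp only [mem_filter_univ] at hi hj hl
  exact (hf col).not_adj_of_induce hi hj hl hij hjl hil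

theorem universalCount_le_one
    (hf : ∀ col, ((G.addUniversal k).induce (f ⁻¹' {col})).IsAcyclic) (v : V) :
    universalCount f (f (.inl v)) ≤ 1 := by
  by_contra! h
  obtain ⟨i, hi, j, hj, hij⟩ := one_lt_card.mp h
  simp only [mem_filter_univ] at hi hj
  exact (hf _).not_adj_of_induce (c := .inl v) hi hj rfl hij trivial trivial

theorem not_adj_of_universalCount_ne_zero
    (hf : ∀ col, ((G.addUniversal k).induce (f ⁻¹' {col})).IsAcyclic) {v w : V}
    (hv : universalCount f (f (.inl v)) ≠ 0) (hvw : f (.inl v) = f (.inl w)) : ¬ G.Adj v w := by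
  intro hadj
  obtain ⟨i, hi⟩ := card_ne_zero.mp hv
  simp only [mem_filter_univ] at hi
  exact (hf _).not_adj_of_induce (a := .inl v) (c := .inr i) rfl hvw.symm hi hadj trivial
    trivial

theorem isAcyclic_induce_fiber_inl
    (hf : ∀ col, ((G.addUniversal k).induce (f ⁻¹' {col})).IsAcyclic) (col : Fin k) :
    (G.induce {v | f (.inl v) = col}).IsAcyclic :=
  (hf col).comap ⟨fun v => ⟨.inl v.1, v.2⟩, id⟩ fun _ _ h =>
    Subtype.ext (Sum.inl_injective (congrArg Subtype.val h))

theorem colorable_of_forall_isAcyclic_induce_addUniversal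
    (hf : ∀ col, ((G.addUniversal k).induce (f ⁻¹' {col})).IsAcyclic) : G.Colorable k := by
  obtain ⟨g, hg⟩ := exists_ne_of_adj_of_colorable_induce (fun v => f (.inl v))
    fun col => (isAcyclic_induce_fiber_inl hf col).colorable_two
  let C := {col // universalCount f col = 0} × Fin 2 ⊕ {col // universalCount f col = 1}
  have hC : Fintype.card C = k := by
    have := Fintype.two_mul_card_fiber_eq_zero_add_card_fiber_eq_one (fun i : Fin k => f (.inr i))
      rfl (universalCount_le_two hf)
    rw [Fintype.card_fin] at this
    simp only [C, Fintype.card_sum, Fintype.card_prod, Fintype.card_subtype, Fintype.card_fin]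
    rw [mul_comm]
    exact this
  let c (v : V) : C :=
    if hv : universalCount f (f (.inl v)) = 0 then .inl (⟨f (.inl v), hv⟩, g v)
    else .inr ⟨f (.inl v), by have := universalCount_le_one hf v; omega⟩
  refine hC ▸ (Coloring.mk c fun {v w} hadj hvw => ?_).colorable
  simp only [c] at hvw
  split_ifs at hvw with hv hw
  · obtain ⟨hcol, hgvw⟩ := Prod.mk.inj (Sum.inl_injective hvw)
    exact hg hadj (congrArg Subtype.val hcol) hgvw
  · exact not_adj_of_universalCount_ne_zero hf hv (congrArg Subtype.val (Sum.inr_injective hvw))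
      hadj

end AcyclicPartition

end SimpleGraph

theorem colorable_iff_acyclic_partition_general {V : Type*}
    (k : ℕ) (G : SimpleGraph V) :
    G.Colorable k ↔
      ∃ f : (V ⊕ Fin k) → Fin k,
        ∀ col : Fin k, ((G.addUniversal k).induce (f ⁻¹' {col})).IsAcyclic :=
  ⟨fun ⟨c⟩ => ⟨Sum.elim c id, c.isAcyclic_induce_addUniversal⟩,
    fun ⟨_, hf⟩ => SimpleGraph.colorable_of_forall_isAcyclic_induce_addUniversal hf⟩

/-- Let `k ≥ 3` and let `G` be a finite simple graph. Then `G` is `k`-colorable if and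
only if the vertex set of `G'` (obtained from `G` by adding `k` pairwise-adjacent
universal vertices) can be partitioned into `k` parts each inducing an acyclic subgraph. -/
theorem colorable_iff_acyclic_partition {V : Type*} [Fintype V]
    (k : ℕ) (hk : 3 ≤ k) (G : SimpleGraph V) :
    G.Colorable k ↔
      ∃ f : (V ⊕ Fin k) → Fin k,
        ∀ col : Fin k, ((G.addUniversal k).induce (f ⁻¹' {col})).IsAcyclic :=
  colorable_iff_acyclic_partition_general k G
end

section
/- Let V be a set of exactly 5 elements and let c be a 2-edge-coloring of the complete graph on V (an assignment of one of two colors to each unordered pair of distinct elements of V) with no monochromatic triangle. Then for every vertex x ∈ V and each of the two colors b, there are exactly two vertices y ≠ x such that the edge xy has color b. -/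
/-- Let `V` be a set of exactly 5 elements and let `c` be a 2-edge-coloring of the
complete graph on `V` with no monochromatic triangle -/
theorem two_edges_of_each_color {V : Type*} [Fintype V] [DecidableEq V]
    (h5 : Fintype.card V = 5) (c : Sym2 V → Bool)
    (hmono : ¬ ∃ x y z : V, x ≠ y ∧ y ≠ z ∧ x ≠ z ∧
      c s(x, y) = c s(y, z) ∧ c s(y, z) = c s(x, z))
    (x : V) (b : Bool) :
    (Finset.univ.filter (fun y => y ≠ x ∧ c s(x, y) = b)).card = 2 := by
  set S : Bool → Finset V := fun b => Finset.univ.filter (fun y => y ≠ x ∧ c s(x, y) = b)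
    with hS
  have hle : ∀ b, (S b).card ≤ 2 := by
    intro b
    by_contra h
    push_neg at h
    obtain ⟨y1, hy1, y2, hy2, y3, hy3, h12, h13, h23⟩ := Finset.two_lt_card.mp h
    simp only [hS, Finset.mem_filter, Finset.mem_univ, true_and] at hy1 hy2 hy3
    have key : ∀ u v : V, u ≠ x → v ≠ x → u ≠ v → c s(x, u) = b → c s(x, v) = b →
        c s(u, v) = !b := by
      intro u v hu hv huv h1 h2
      have hne : c s(u, v) ≠ b := by
        intro hb
        exact hmono ⟨x, u, v, hu.symm, huv, hv.symm, by rw [h1, hb], by rw [hb, h2]⟩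
      cases hbv : c s(u, v) <;> cases b <;> simp_all
    have e12 := key y1 y2 hy1.1 hy2.1 h12 hy1.2 hy2.2
    have e13 := key y1 y3 hy1.1 hy3.1 h13 hy1.2 hy3.2
    have e23 := key y2 y3 hy2.1 hy3.1 h23 hy2.2 hy3.2
    exact hmono ⟨y1, y2, y3, h12, h23, h13, by rw [e12, e23], by rw [e23, e13]⟩
  have hunion : S true ∪ S false = Finset.univ.erase x := by
    ext y
    simp only [hS, Finset.mem_union, Finset.mem_filter, Finset.mem_univ, true_and,
      Finset.mem_erase, and_true]
    cases h : c s(x, y) <;> tauto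
  have hdisj : Disjoint (S true) (S false) := by
    rw [Finset.disjoint_left]
    intro y h1 h2
    simp only [hS, Finset.mem_filter] at h1 h2
    simp [h1.2.2] at h2
  have hsum : (S true).card + (S false).card = 4 := by
    rw [← Finset.card_union_of_disjoint hdisj, hunion, Finset.card_erase_of_mem
      (Finset.mem_univ x), Finset.card_univ, h5]
  have h1 := hle true
  have h2 := hle false
  cases b <;> simp only [hS] at h1 h2 hsum ⊢ <;> omega
end

section
/- Let s, t, u, v, w be the five pairwise distinct elements of a 5-element set V, and let c be a 2-edge-coloring of the complete graph on V with no monochromatic triangle. Then exactly two of the three colors c(uv), c(uw), c(vw) are equal to c(st); in particular the triangle uvw is not monochromatic and the color of the edge st equals the color appearing on exactly two of the three edges of the triangle uvw (the main color of uvw). -/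
set_option maxHeartbeats 2000000 in
set_option synthInstance.maxHeartbeats 2000000 in
set_option synthInstance.maxSize 2000 in
lemma k5_bool_aux (est esu esv esw etu etv etw euv euw evw : Bool)
    (h1 : ¬ (est = etu ∧ etu = esu))
    (h2 : ¬ (est = etv ∧ etv = esv))
    (h3 : ¬ (est = etw ∧ etw = esw))
    (h4 : ¬ (esu = euv ∧ euv = esv))
    (h5 : ¬ (esu = euw ∧ euw = esw))
    (h6 : ¬ (esv = evw ∧ evw = esw))
    (h7 : ¬ (etu = euv ∧ euv = etv))
    (h8 : ¬ (etu = euw ∧ euw = etw))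
    (h9 : ¬ (etv = evw ∧ evw = etw))
    (h10 : ¬ (euv = evw ∧ evw = euw)) :
    (if euv = est then 1 else 0) + (if euw = est then 1 else 0) +
      (if evw = est then 1 else 0) = 2 := by
  revert h1 h2 h3 h4 h5 h6 h7 h8 h9 h10
  revert est esu esv esw etu etv etw euv euw evw
  decide

/-- Let `s, t, u, v, w` be the five pairwise distinct elements of a 5-element set `V`,
and let `c` be a 2-edge-coloring of the complete graph on `V` with no monochromatic
triangle. Then exactly two of the three colors `c(uv)`, `c(uw)`, `c(vw)` are equal to
`c(st)`; in particular the triangle `uvw` is not monochromatic and the color of `st` is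
the main color of the triangle `uvw`. -/
theorem main_color_eq_opposite_edge {V : Type*} [Fintype V]
    (h5 : Fintype.card V = 5) (s t u v w : V)
    (hst : s ≠ t) (hsu : s ≠ u) (hsv : s ≠ v) (hsw : s ≠ w)
    (htu : t ≠ u) (htv : t ≠ v) (htw : t ≠ w)
    (huv : u ≠ v) (huw : u ≠ w) (hvw : v ≠ w)
    (c : Sym2 V → Bool)
    (hmono : ¬ ∃ x y z : V, x ≠ y ∧ y ≠ z ∧ x ≠ z ∧
      c s(x, y) = c s(y, z) ∧ c s(y, z) = c s(x, z)) :
    (if c s(u, v) = c s(s, t) then 1 else 0) +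
      (if c s(u, w) = c s(s, t) then 1 else 0) +
      (if c s(v, w) = c s(s, t) then 1 else 0) = 2 := by
  have H : ∀ x y z : V, x ≠ y → y ≠ z → x ≠ z →
      ¬ (c s(x, y) = c s(y, z) ∧ c s(y, z) = c s(x, z)) :=
    fun x y z hxy hyz hxz h => hmono ⟨x, y, z, hxy, hyz, hxz, h.1, h.2⟩
  exact k5_bool_aux (c s(s,t)) (c s(s,u)) (c s(s,v)) (c s(s,w)) (c s(t,u)) (c s(t,v))
    (c s(t,w)) (c s(u,v)) (c s(u,w)) (c s(v,w))
    (H s t u hst htu hsu) (H s t v hst htv hsv) (H s t w hst htw hsw)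
    (H s u v hsu huv hsv) (H s u w hsu huw hsw) (H s v w hsv hvw hsw)
    (H t u v htu huv htv) (H t u w htu huw htw) (H t v w htv hvw htw)
    (H u v w huv hvw huw)
end

section
/- Let s, t, u, v, w be the five pairwise distinct elements of a 5-element set V. Let b, b₁, b₂, b₃ be colors from a two-element set of colors such that exactly two of b₁, b₂, b₃ are equal to b. Then there exists a 2-edge-coloring c of the complete graph on V with no monochromatic triangle such that c(st) = b, c(uv) = b₁, c(uw) = b₂, and c(vw) = b₃. -/
private def pent (i j : Fin 5) : Bool :=
  decide ((i.val + 1) % 5 = j.val ∨ (j.val + 1) % 5 = i.val)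

private lemma pent_comm : ∀ i j : Fin 5, pent i j = pent j i := by decide

private lemma pent_key : ∀ (b : Bool) (i j k : Fin 5), i ≠ j → j ≠ k → i ≠ k →
    ¬((if pent i j then b else !b) = (if pent j k then b else !b) ∧
      (if pent j k then b else !b) = (if pent i k then b else !b)) := by decide

private lemma pentagon_aux {V : Type*} [Fintype V] (h5 : Fintype.card V = 5)
    (a₁ a₂ a₃ a₄ a₅ : V)
    (h12 : a₁ ≠ a₂) (h13 : a₁ ≠ a₃) (h14 : a₁ ≠ a₄) (h15 : a₁ ≠ a₅)
    (h23 : a₂ ≠ a₃) (h24 : a₂ ≠ a₄) (h25 : a₂ ≠ a₅)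
    (h34 : a₃ ≠ a₄) (h35 : a₃ ≠ a₅) (h45 : a₄ ≠ a₅) (b : Bool) :
    ∃ c : Sym2 V → Bool,
      (¬ ∃ x y z : V, x ≠ y ∧ y ≠ z ∧ x ≠ z ∧
        c s(x, y) = c s(y, z) ∧ c s(y, z) = c s(x, z)) ∧
      c s(a₁, a₂) = b ∧ c s(a₃, a₄) = b ∧ c s(a₄, a₅) = b ∧ c s(a₃, a₅) = !b := by
  classical
  set f : V → Fin 5 := fun x =>
    if x = a₁ then 0 else if x = a₂ then 1 else if x = a₃ then 2 else
      if x = a₄ then 3 else 4 with hf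
  have cover : ∀ x : V, x = a₁ ∨ x = a₂ ∨ x = a₃ ∨ x = a₄ ∨ x = a₅ := by
    have huniv : ({a₁, a₂, a₃, a₄, a₅} : Finset V) = Finset.univ := by
      apply Finset.eq_univ_of_card
      rw [h5]
      simp [h12, h13, h14, h15, h23, h24, h25, h34, h35, h45]
    intro x
    have : x ∈ ({a₁, a₂, a₃, a₄, a₅} : Finset V) := huniv ▸ Finset.mem_univ x
    simpa using this
  have fvals : f a₁ = 0 ∧ f a₂ = 1 ∧ f a₃ = 2 ∧ f a₄ = 3 ∧ f a₅ = 4 := by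
    refine ⟨?_, ?_, ?_, ?_, ?_⟩ <;>
      simp [hf, h12.symm, h13.symm, h14.symm, h15.symm, h23.symm, h24.symm, h25.symm,
        h34.symm, h35.symm, h45.symm]
  obtain ⟨f1, f2, f3, f4, f5⟩ := fvals
  have finj : ∀ x y : V, x ≠ y → f x ≠ f y := by
    intro x y hxy
    rcases cover x with rfl | rfl | rfl | rfl | rfl <;>
      rcases cover y with rfl | rfl | rfl | rfl | rfl <;>
      simp_all
  refine ⟨Sym2.lift ⟨fun x y => if pent (f x) (f y) then b else !b, by
    intro x y; dsimp only; rw [pent_comm]⟩, ?_, ?_, ?_, ?_, ?_⟩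
  · rintro ⟨x, y, z, hxy, hyz, hxz, hc1, hc2⟩
    simp only [Sym2.lift_mk] at hc1 hc2
    exact pent_key b (f x) (f y) (f z) (finj x y hxy) (finj y z hyz) (finj x z hxz) ⟨hc1, hc2⟩
  · have hp : pent 0 1 = true := by decide
    simp [Sym2.lift_mk, f1, f2, hp]
  · have hp : pent 2 3 = true := by decide
    simp [Sym2.lift_mk, f3, f4, hp]
  · have hp : pent 3 4 = true := by decide
    simp [Sym2.lift_mk, f4, f5, hp]
  · have hp : pent 2 4 = false := by decide
    simp [Sym2.lift_mk, f3, f5, hp]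

/-- Let `s, t, u, v, w` be the five pairwise distinct elements of a 5-element set `V`,
and let `b, b₁, b₂, b₃` be colors from a two-element set of colors such that exactly two
of `b₁, b₂, b₃` are equal to `b`. Then there exists a 2-edge-coloring of the complete
graph on `V` with no monochromatic triangle giving color `b` to the edge `st` and colors
`b₁, b₂, b₃` to the edges `uv, uw, vw` respectively. -/
theorem exists_coloring_without_mono_triangle {V : Type*} [Fintype V]
    (h5 : Fintype.card V = 5) (s t u v w : V)
    (hst : s ≠ t) (hsu : s ≠ u) (hsv : s ≠ v) (hsw : s ≠ w)
    (htu : t ≠ u) (htv : t ≠ v) (htw : t ≠ w)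
    (huv : u ≠ v) (huw : u ≠ w) (hvw : v ≠ w)
    (b b₁ b₂ b₃ : Bool)
    (hexact : (if b₁ = b then 1 else 0) + (if b₂ = b then 1 else 0) +
      (if b₃ = b then 1 else 0) = 2) :
    ∃ c : Sym2 V → Bool,
      (¬ ∃ x y z : V, x ≠ y ∧ y ≠ z ∧ x ≠ z ∧
        c s(x, y) = c s(y, z) ∧ c s(y, z) = c s(x, z)) ∧
      c s(s, t) = b ∧ c s(u, v) = b₁ ∧ c s(u, w) = b₂ ∧ c s(v, w) = b₃ := by
  by_cases h1 : b₁ = b <;> by_cases h2 : b₂ = b <;> by_cases h3 : b₃ = b <;>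
    simp [h1, h2, h3] at hexact
  · -- b₁ = b, b₂ = b, b₃ = !b  : cycle s t v u w
    obtain ⟨c, hno, e1, e2, e3, e4⟩ := pentagon_aux h5 s t v u w hst hsv hsu hsw htv htu htw
      (Ne.symm huv) hvw huw b
    refine ⟨c, hno, e1, ?_, ?_, ?_⟩
    · rw [h1, Sym2.eq_swap]; exact e2
    · rw [h2]; exact e3
    · rw [show b₃ = !b by revert h3; cases b₃ <;> cases b <;> simp]; exact e4
  · -- b₁ = b, b₂ = !b, b₃ = b : cycle s t u v w
    obtain ⟨c, hno, e1, e2, e3, e4⟩ := pentagon_aux h5 s t u v w hst hsu hsv hsw htu htv htw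
      huv huw hvw b
    refine ⟨c, hno, e1, ?_, ?_, ?_⟩
    · rw [h1]; exact e2
    · rw [show b₂ = !b by revert h2; cases b₂ <;> cases b <;> simp]; exact e4
    · rw [h3]; exact e3
  · -- b₁ = !b, b₂ = b, b₃ = b : cycle s t u w v
    obtain ⟨c, hno, e1, e2, e3, e4⟩ := pentagon_aux h5 s t u w v hst hsu hsw hsv htu htw htv
      huw huv (Ne.symm hvw) b
    refine ⟨c, hno, e1, ?_, ?_, ?_⟩
    · rw [show b₁ = !b by revert h1; cases b₁ <;> cases b <;> simp]; exact e4
    · rw [h2]; exact e2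
    · rw [h3, Sym2.eq_swap]; exact e3
end

section
/- Let k ≥ 1, let G be a finite simple graph, let u be a vertex of G, let S be a subset of the neighbors of u, let m ≥ 1, and let p be a function from S to {1,…,m}. Let G'' be the simple graph whose vertex set is the disjoint union of V(G), a set {r₁,…,r_m} of m new vertices, and a set C of k−1 new vertices, with the following edges and no others: all edges of G except the edges from u to the vertices of S; for each s ∈ S, an edge between s and r_{p(s)}; the vertices of C are pairwise adjacent (C is a clique of size k−1); and every vertex of C is adjacent to u and to each of r₁,…,r_m. Then G is k-colorable if and only if G'' is k-colorable. -/
/-- The graph `G''` obtained from `G` as follows: the edges from `u` to the vertices of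
`S` are deleted; each `s ∈ S` is instead attached to the new vertex `r_{p(s)}` among `m`
new vertices `r₁, …, r_m`; and a new clique `C` of `k - 1` pairwise adjacent vertices is
added, each of whose vertices is adjacent to `u` and to each of `r₁, …, r_m`. -/
def reattachGadget {V : Type*} (G : SimpleGraph V) (u : V) (S : Set V)
    (k m : ℕ) (p : S → Fin m) : SimpleGraph (V ⊕ (Fin m ⊕ Fin (k - 1))) where
  Adj x y :=
    match x, y with
    | Sum.inl a, Sum.inl b =>
        G.Adj a b ∧ ¬((a = u ∧ b ∈ S) ∨ (b = u ∧ a ∈ S))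
    | Sum.inl a, Sum.inr (Sum.inl r) => ∃ h : a ∈ S, p ⟨a, h⟩ = r
    | Sum.inr (Sum.inl r), Sum.inl a => ∃ h : a ∈ S, p ⟨a, h⟩ = r
    | Sum.inl a, Sum.inr (Sum.inr _) => a = u
    | Sum.inr (Sum.inr _), Sum.inl a => a = u
    | Sum.inr (Sum.inl _), Sum.inr (Sum.inl _) => False
    | Sum.inr (Sum.inl _), Sum.inr (Sum.inr _) => True
    | Sum.inr (Sum.inr _), Sum.inr (Sum.inl _) => True
    | Sum.inr (Sum.inr c₁), Sum.inr (Sum.inr c₂) => c₁ ≠ c₂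
  symm := by
    constructor
    rintro (a | (r | c₁)) (b | (r' | c₂)) h
    · exact ⟨h.1.symm, fun h' => h.2 h'.symm⟩
    · exact h
    · exact h
    · exact h
    · exact h.elim
    · trivial
    · exact h
    · trivial
    · exact Ne.symm h
  loopless := by
    constructor
    rintro (a | (r | c₁)) h
    · exact G.irrefl h.1
    · exact h
    · exact h rfl

open Finset in
theorem Function.Injective.eq_of_notMem_range {α β : Type*} [Fintype α] [Fintype β] {g : β → α}
    (hg : Function.Injective g) (hcard : Fintype.card α = Fintype.card β + 1) {a b : α}
    (ha : a ∉ Set.range g) (hb : b ∉ Set.range g) : a = b := by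
  classical
  have hcompl : #(univ.image g)ᶜ = 1 := by
    rw [card_compl, card_image_of_injective _ hg, card_univ, hcard, Nat.add_sub_cancel_left]
  refine card_le_one.mp hcompl.le a ?_ b ?_
  · simpa [Set.mem_range] using ha
  · simpa [Set.mem_range] using hb

section reattachGadget

variable {V : Type*} {G : SimpleGraph V} {u : V} {S : Set V} {m n : ℕ} {p : S → Fin m}

/-- The `n` clique vertices use `n` distinct colors, all different from the colors of `u` and
of every `r_i`; with `n + 1` colors available this leaves only one color for `u` and the `r_i`. -/
theorem reattachGadget_coloring_inr_inl_eq
    (f : (reattachGadget G u S (n + 1) m p).Coloring (Fin (n + 1))) (r : Fin m) :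
    f (.inr (.inl r)) = f (.inl u) := by
  have hclique : Function.Injective fun j : Fin n => f (.inr (.inr j)) := by
    intro j j' he
    by_contra hne
    exact f.valid (show (reattachGadget G u S (n + 1) m p).Adj (.inr (.inr j)) (.inr (.inr j'))
      from hne) he
  refine hclique.eq_of_notMem_range (by simp) ?_ ?_
  · rintro ⟨j, hj⟩
    exact f.valid (show (reattachGadget G u S (n + 1) m p).Adj (.inr (.inl r)) (.inr (.inr j))
      from trivial) hj.symm
  · rintro ⟨j, hj⟩
    exact f.valid (show (reattachGadget G u S (n + 1) m p).Adj (.inl u) (.inr (.inr j))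
      from rfl) hj.symm

theorem reattachGadget_colorable_of_colorable (hS : ∀ s ∈ S, G.Adj u s)
    (hG : G.Colorable (n + 1)) :
    (reattachGadget G u S (n + 1) m p).Colorable (n + 1) := by
  obtain ⟨c⟩ := hG
  refine ⟨.mk (Sum.elim c (Sum.elim (fun _ => c u) (c u).succAbove)) ?_⟩
  rintro (a | r | j) (b | r' | j') h
  · exact c.valid h.1
  · exact (c.valid (hS a h.1)).symm
  · cases h
    exact (Fin.succAbove_ne _ j').symm
  · exact c.valid (hS b h.1)
  · exact h.elim
  · exact (Fin.succAbove_ne _ j').symm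
  · cases h
    exact Fin.succAbove_ne _ j
  · exact Fin.succAbove_ne _ j
  · exact fun he => h (Fin.succAbove_right_injective he)

/-- An edge `u s` with `s ∈ S` stays properly colored because `r_{p s}`, adjacent to `s`,
has the color of `u`. -/
theorem colorable_of_reattachGadget_colorable
    (hG : (reattachGadget G u S (n + 1) m p).Colorable (n + 1)) : G.Colorable (n + 1) := by
  obtain ⟨f⟩ := hG
  have hS : ∀ s (hs : s ∈ S), f (.inl s) ≠ f (.inl u) := fun s hs => by
    rw [← reattachGadget_coloring_inr_inl_eq f (p ⟨s, hs⟩)]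
    exact f.valid (show (reattachGadget G u S (n + 1) m p).Adj
      (.inl s) (.inr (.inl (p ⟨s, hs⟩))) from ⟨hs, rfl⟩)
  refine ⟨.mk (fun a => f (.inl a)) fun {a b} hab => ?_⟩
  by_cases hcut : (a = u ∧ b ∈ S) ∨ (b = u ∧ a ∈ S)
  · rcases hcut with ⟨rfl, hb⟩ | ⟨rfl, ha⟩
    · exact (hS b hb).symm
    · exact hS a ha
  · exact f.valid
      (show (reattachGadget G u S (n + 1) m p).Adj (.inl a) (.inl b) from ⟨hab, hcut⟩)

end reattachGadget

theorem colorable_iff_reattachGadget_colorable_general {V : Type*}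
    (k : ℕ) (hk : 1 ≤ k) (G : SimpleGraph V) (u : V) (S : Set V)
    (hS : ∀ s ∈ S, G.Adj u s) (m : ℕ) (p : S → Fin m) :
    G.Colorable k ↔ (reattachGadget G u S k m p).Colorable k := by
  obtain ⟨n, rfl⟩ : ∃ n, k = n + 1 := ⟨k - 1, by omega⟩
  exact ⟨reattachGadget_colorable_of_colorable hS, colorable_of_reattachGadget_colorable⟩

/-- Let `k ≥ 1`, let `G` be a finite simple graph, let `u` be a vertex, `S` a subset of
the neighbors of `u`, `m ≥ 1`, and `p : S → {1, …, m}`. Then `G` is `k`-colorable if and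
only if `G''` is `k`-colorable. -/
theorem colorable_iff_reattachGadget_colorable {V : Type*} [Fintype V]
    (k : ℕ) (hk : 1 ≤ k) (G : SimpleGraph V) (u : V) (S : Set V)
    (hS : ∀ s ∈ S, G.Adj u s) (m : ℕ) (hm : 1 ≤ m) (p : S → Fin m) :
    G.Colorable k ↔ (reattachGadget G u S k m p).Colorable k :=
  colorable_iff_reattachGadget_colorable_general k hk G u S hS m p
end

section
/- Let k ≥ 2 and, for a finite simple graph G, let G⋆K_k denote the simple graph on the vertex set V(G) × {1,…,k} in which (u,i) and (v,j) are adjacent if and only if either uv is an edge of G, or u = v and i ≠ j (each vertex of G is replaced by a clique of size k and each edge of G by a complete bipartite graph between the corresponding cliques; this is the lexicographic product of G with K_k). Then for all finite simple graphs G and H, G contains H as an induced subgraph if and only if G⋆K_k contains H⋆K_k as an induced subgraph; equivalently, G is H-free if and only if G⋆K_k is (H⋆K_k)-free. -/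
/-!
An embedding `H ↪g G` blows up coordinatewise to `H ⋆ K_k ↪g G ⋆ K_k`. Conversely, given an
embedding `φ` of the blow-ups, each `w` has `k` images whose first coordinates form a set `T w`
of vertices of `G`; since `φ` is injective, any `s` sets of this kind cover at least `s`
vertices (count the `k·s` images), so Hall's theorem picks an injective `f w ∈ T w`. Vertices
of `G ⋆ K_k` with distinct first coordinates are adjacent exactly when those coordinates are
adjacent in `G`, so pulling adjacency back along `φ` shows that `f` is an induced embedding.
-/

open Finset

/-- The lexicographic product of `G` with the complete graph `K_k`: each vertex of `G` is
replaced by a clique of size `k` and each edge of `G` by a complete bipartite graph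
between the corresponding cliques. -/
def lexCompleteProd {V : Type*} (G : SimpleGraph V) (k : ℕ) :
    SimpleGraph (V × Fin k) where
  Adj x y := G.Adj x.1 y.1 ∨ (x.1 = y.1 ∧ x.2 ≠ y.2)
  symm := by
    constructor
    rintro x y (h | ⟨h1, h2⟩)
    · exact Or.inl (G.symm.symm _ _ h)
    · exact Or.inr ⟨h1.symm, h2.symm⟩
  loopless := by
    constructor
    rintro x (h | ⟨-, h⟩)
    · exact G.loopless.irrefl x.1 h
    · exact h rfl

section LexCompleteProd

variable {V W : Type*} {G : SimpleGraph V} {H : SimpleGraph W} {k : ℕ}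

@[simp]
theorem lexCompleteProd_adj {x y : V × Fin k} :
    (lexCompleteProd G k).Adj x y ↔ G.Adj x.1 y.1 ∨ (x.1 = y.1 ∧ x.2 ≠ y.2) :=
  Iff.rfl

theorem lexCompleteProd_adj_of_fst_ne {x y : V × Fin k} (h : x.1 ≠ y.1) :
    (lexCompleteProd G k).Adj x y ↔ G.Adj x.1 y.1 := by
  simp [h]

def SimpleGraph.Embedding.lexCompleteProd (f : H ↪g G) (k : ℕ) :
    _root_.lexCompleteProd H k ↪g _root_.lexCompleteProd G k where
  toFun p := (f p.1, p.2)
  inj' := f.injective.prodMap Function.injective_id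
  map_rel_iff' := by simp [f.injective.eq_iff]

theorem SimpleGraph.Embedding.adj_iff_of_forall_exists_fst_eq
    (φ : _root_.lexCompleteProd H k ↪g _root_.lexCompleteProd G k) {f : W → V} (hf : f.Injective)
    (hφf : ∀ w, ∃ i, (φ (w, i)).1 = f w) (w w' : W) :
    G.Adj (f w) (f w') ↔ H.Adj w w' := by
  rcases eq_or_ne w w' with rfl | hne
  · simp
  obtain ⟨i, hi⟩ := hφf w
  obtain ⟨j, hj⟩ := hφf w'
  have hφ := φ.map_adj_iff (v := (w, i)) (w := (w', j))
  rwa [lexCompleteProd_adj_of_fst_ne (by simpa [hi, hj] using hf.ne hne),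
    lexCompleteProd_adj_of_fst_ne hne, hi, hj] at hφ

end LexCompleteProd

theorem Function.Injective.exists_injective_forall_exists_fst_eq {α β ι : Type*}
    [Fintype ι] [Nonempty ι] {g : α × ι → β × ι} (hg : g.Injective) :
    ∃ f : α → β, f.Injective ∧ ∀ a, ∃ i, (g (a, i)).1 = f a := by
  classical
  set T : α → Finset β := fun a => univ.image fun i => (g (a, i)).1
  have hall (s : Finset α) : #s ≤ #(s.biUnion T) := by
    have hmaps : Set.MapsTo g ↑(s ×ˢ (univ : Finset ι)) ↑(s.biUnion T ×ˢ (univ : Finset ι)) := by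
      rintro ⟨a, i⟩ hai
      simp only [coe_product, Set.mem_prod, mem_coe, mem_univ, and_true] at hai ⊢
      exact mem_biUnion.2 ⟨a, hai, mem_image_of_mem _ (mem_univ i)⟩
    have hcard := card_le_card_of_injOn g hmaps hg.injOn
    rw [card_product, card_product] at hcard
    exact Nat.le_of_mul_le_mul_right hcard (card_pos.2 univ_nonempty)
  obtain ⟨f, hf, hfT⟩ := (all_card_le_biUnion_card_iff_exists_injective T).1 hall
  refine ⟨f, hf, fun a => ?_⟩
  obtain ⟨i, -, hi⟩ := mem_image.1 (hfT a)
  exact ⟨i, hi⟩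

theorem induced_iff_lexCompleteProd_induced_general {V W : Type*}
    (k : ℕ) (hk : 2 ≤ k) (G : SimpleGraph V) (H : SimpleGraph W) :
    Nonempty (H ↪g G) ↔ Nonempty (lexCompleteProd H k ↪g lexCompleteProd G k) := by
  refine ⟨fun ⟨f⟩ => ⟨f.lexCompleteProd k⟩, fun ⟨φ⟩ => ?_⟩
  have : Nonempty (Fin k) := ⟨⟨0, by omega⟩⟩
  obtain ⟨f, hf, hφf⟩ := φ.injective.exists_injective_forall_exists_fst_eq
  exact ⟨⟨⟨f, hf⟩, φ.adj_iff_of_forall_exists_fst_eq hf hφf _ _⟩⟩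

/-- Let `k ≥ 2`. For all finite simple graphs `G` and `H`, `G` contains `H` as an induced
subgraph if and only if `G ⋆ K_k` contains `H ⋆ K_k` as an induced subgraph. -/
theorem induced_iff_lexCompleteProd_induced {V W : Type*} [Fintype V] [Fintype W]
    (k : ℕ) (hk : 2 ≤ k) (G : SimpleGraph V) (H : SimpleGraph W) :
    Nonempty (H ↪g G) ↔ Nonempty (lexCompleteProd H k ↪g lexCompleteProd G k) :=
  induced_iff_lexCompleteProd_induced_general k hk G H
end

section
/- For a finite simple graph G, let f(G) denote the simple graph on the vertex set V(G) × {0,1} in which (u,0) and (v,0) are adjacent if and only if uv is an edge of G, (u,0) is adjacent to (u,1) for every u ∈ V(G), and there are no other edges (f(G) is obtained from G by adding a pendant vertex to each vertex). Then for all finite simple graphs G and H, G contains H as an induced subgraph if and only if f(G) contains f(H) as an induced subgraph; equivalently, G is H-free if and only if f(G) is f(H)-free. -/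
/-- The graph obtained from `G` by adding a pendant vertex to each vertex: on
`V × {0, 1}`, the vertices `(u, 0)` and `(v, 0)` are adjacent iff `uv ∈ E(G)`, and
`(u, 0)` is adjacent to `(u, 1)` for every `u`; there are no other edges. -/
def addPendants {V : Type*} (G : SimpleGraph V) : SimpleGraph (V × Fin 2) where
  Adj x y := (x.2 = 0 ∧ y.2 = 0 ∧ G.Adj x.1 y.1) ∨ (x.1 = y.1 ∧ x.2 ≠ y.2)
  symm := by
    refine ⟨?_⟩
    rintro x y (⟨h0, h1, h⟩ | ⟨h1, h2⟩)
    · exact Or.inl ⟨h1, h0, G.adj_symm h⟩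
    · exact Or.inr ⟨h1.symm, h2.symm⟩
  loopless := by
    refine ⟨?_⟩
    rintro x (⟨-, -, h⟩ | ⟨-, h⟩)
    · exact G.irrefl h
    · exact h rfl

/-! The pendant `(u, 1)` of `addPendants G` has the single neighbour `(u, 0)`. So if an induced
embedding `ψ : addPendants H ↪g addPendants G` sends `(w, 0)` onto a pendant, then `(w, 1)` and
every `(w', 0)` with `w'` adjacent to `w` go to the same vertex; hence `w` is isolated and
`ψ (w, 1)` is a base vertex. Swapping `(w, 0)` with `(w, 1)` at isolated `w` is an automorphism of
`addPendants H`; after precomposing with these swaps, `ψ` maps base vertices to base vertices and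
its restriction to them is an induced embedding `H ↪g G`. -/

namespace addPendants

variable {V W : Type*} {G : SimpleGraph V} {H : SimpleGraph W}

lemma adj_iff (x y : V × Fin 2) :
    (addPendants G).Adj x y ↔ (x.2 = 0 ∧ y.2 = 0 ∧ G.Adj x.1 y.1) ∨ (x.1 = y.1 ∧ x.2 ≠ y.2) :=
  Iff.rfl

lemma adj_of_snd_eq_zero {x y : V × Fin 2} (hx : x.2 = 0) (hy : y.2 = 0) :
    (addPendants G).Adj x y ↔ G.Adj x.1 y.1 := by
  simp [adj_iff, hx, hy]

lemma adj_pendant_iff (u : V) (y : V × Fin 2) :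
    (addPendants G).Adj (u, 1) y ↔ y = (u, 0) := by
  obtain ⟨v, j⟩ := y
  fin_cases j <;> simp [adj_iff, eq_comm]

lemma adj_pendant (u : V) : (addPendants G).Adj (u, 0) (u, 1) :=
  Or.inr ⟨rfl, zero_ne_one⟩

def map (φ : H ↪g G) : addPendants H ↪g addPendants G where
  toFun x := (φ x.1, x.2)
  inj' x y h := Prod.ext (φ.injective (Prod.mk.inj h).1) (Prod.mk.inj h).2
  map_rel_iff' {x y} := show (addPendants G).Adj (φ x.1, x.2) (φ y.1, y.2) ↔ _ by
    simp [adj_iff, φ.injective.eq_iff]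

def swapAt (s : W → Fin 2) (hs : ∀ w, s w ≠ 0 → ∀ w', ¬ H.Adj w w') :
    addPendants H ↪g addPendants H where
  toFun x := (x.1, x.2 + s x.1)
  inj' x y h := by
    obtain ⟨h1, h2⟩ := Prod.mk.inj h
    rw [h1] at h2
    exact Prod.ext h1 (add_right_cancel h2)
  map_rel_iff' {x y} := show (addPendants H).Adj (x.1, x.2 + s x.1) (y.1, y.2 + s y.1) ↔ _ by
    obtain ⟨w, i⟩ := x
    obtain ⟨w', j⟩ := y
    by_cases hadj : H.Adj w w'
    · have hw : s w = 0 := by_contra fun h => hs w h w' hadj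
      have hw' : s w' = 0 := by_contra fun h => hs w' h w hadj.symm
      simp [adj_iff, hw, hw', hadj]
    · simp only [adj_iff, hadj, and_false, false_or, and_congr_right_iff]
      rintro rfl
      exact (add_left_injective (s w)).ne_iff

lemma map_eq_of_adj_of_snd_eq_one (ψ : addPendants H ↪g addPendants G) {x y : W × Fin 2}
    (hxy : (addPendants H).Adj x y) (hx : (ψ x).2 = 1) : ψ y = ((ψ x).1, 0) := by
  have h := ψ.map_adj_iff.2 hxy
  rwa [← Prod.mk.eta (p := ψ x), hx, adj_pendant_iff] at h

lemma isolated_of_snd_eq_one (ψ : addPendants H ↪g addPendants G) {w : W}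
    (hw : (ψ (w, 0)).2 = 1) (w' : W) : ¬ H.Adj w w' := by
  intro hadj
  have hpendant := map_eq_of_adj_of_snd_eq_one ψ (adj_pendant w) hw
  have hneighbour := map_eq_of_adj_of_snd_eq_one ψ
    ((adj_of_snd_eq_zero (x := (w, 0)) (y := (w', 0)) rfl rfl).2 hadj) hw
  exact zero_ne_one (congrArg Prod.snd (ψ.injective (hneighbour.trans hpendant.symm)))

def baseEmbedding (ψ : addPendants H ↪g addPendants G) (hψ : ∀ w, (ψ (w, 0)).2 = 0) :
    H ↪g G where
  toFun w := (ψ (w, 0)).1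
  inj' w w' h := congrArg Prod.fst (ψ.injective (Prod.ext h ((hψ w).trans (hψ w').symm)))
  map_rel_iff' {w w'} := show G.Adj (ψ (w, 0)).1 (ψ (w', 0)).1 ↔ _ by
    rw [← adj_of_snd_eq_zero (hψ w) (hψ w'), ψ.map_adj_iff, adj_of_snd_eq_zero rfl rfl]

def unmap (ψ : addPendants H ↪g addPendants G) : H ↪g G :=
  let s w := (ψ (w, 0)).2
  have hs : ∀ w, s w ≠ 0 → ∀ w', ¬ H.Adj w w' := fun w hw =>
    isolated_of_snd_eq_one ψ (Fin.eq_one_of_ne_zero _ hw)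
  baseEmbedding (ψ.comp (swapAt s hs)) fun w => by
    show (ψ (w, 0 + s w)).2 = 0
    by_cases hw : s w = 0
    · rwa [hw]
    · have hw1 := Fin.eq_one_of_ne_zero _ hw
      rw [hw1, zero_add, map_eq_of_adj_of_snd_eq_one ψ (adj_pendant w) hw1]

end addPendants

theorem induced_iff_addPendants_induced_general {V W : Type*}
    (G : SimpleGraph V) (H : SimpleGraph W) :
    Nonempty (H ↪g G) ↔ Nonempty (addPendants H ↪g addPendants G) :=
  ⟨fun ⟨φ⟩ => ⟨addPendants.map φ⟩, fun ⟨ψ⟩ => ⟨addPendants.unmap ψ⟩⟩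

/-- For all finite simple graphs `G` and `H`, `G` contains `H` as an induced subgraph if
and only if `f(G)` contains `f(H)` as an induced subgraph, where `f` adds a pendant
vertex to each vertex. -/
theorem induced_iff_addPendants_induced {V W : Type*} [Fintype V] [Fintype W]
    (G : SimpleGraph V) (H : SimpleGraph W) :
    Nonempty (H ↪g G) ↔ Nonempty (addPendants H ↪g addPendants G) :=
  induced_iff_addPendants_induced_general G H
end
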